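/- arXiv:2012.00798 — 3 statements merged into one kernel-verified Lean document; each statement's English description precedes it below -/
import Mathlib

section
/- Let (x_n) ⊆ C([0,T];ℝ^d) converge uniformly to x ∈ C([0,T];ℝ^d), and let (η_n) be continuous functions of bounded variation on [0,T] converging uniformly to η, with M := sup_n ‖η_n‖_BV < ∞. Then the functions t ↦ ∫_0^t ⟨x_n(s), dη_n(s)⟩ converge uniformly on [0,T] to t ↦ ∫_0^t ⟨x(s), dη(s)⟩, where the integrals are Lebesgue–Stieltjes integrals. -/
/-!
With `v` the variation function of `η`, the integral against `dη` is `∫ ψ d(v + η) - ∫ ψ dv`,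
and both measures give `(0, t]` mass at most `3 V(η)`; hence `|∫_0^t ψ dη| ≤ 3 ‖ψ‖_∞ V(η)`.
This settles the change of integrand from `xₙ` to `x`. For the fixed continuous integrand `x`,
pick `K` so that `x` oscillates by at most `ε` on intervals of length `T / K`: the left-endpoint
Riemann–Stieltjes sum with `K` equal steps then approximates `∫_0^t x dη` to within `3 ε M`,
uniformly in `t` and in every integrator of variation at most `M`, i.e. in all `ηₙ` and in `η`
(lower semicontinuity of the variation). For fixed `K` the Riemann sums involve only finitely many
values of the integrator, so they converge uniformly.
-/

open MeasureTheory Set Filter Topology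
open scoped ENNReal Classical

noncomputable section

/-- The Lebesgue–Stieltjes measure associated to a monotone function (zero measure otherwise). -/
def lsMeasure (f : ℝ → ℝ) : Measure ℝ :=
  if h : Monotone f then h.stieltjesFunction.measure else 0

/-- Total variation of `η` on `[0, min (max t 0) T]`, as a real number. -/
def varFun (T : ℝ) (η : ℝ → ℝ) (t : ℝ) : ℝ :=
  (eVariationOn η (Icc 0 (min (max t 0) T))).toReal

/-- `η` clamped to its values on `[0,T]`. -/
def clampFun (T : ℝ) (η : ℝ → ℝ) (t : ℝ) : ℝ := η (min (max t 0) T)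

/-- The Lebesgue–Stieltjes integral `∫_0^t x dη` of a scalar function `x` against a
(right-continuous) function `η` of bounded variation on `[0,T]`, defined through the
Jordan decomposition `η = (v + η) - v` where `v` is the variation function of `η`. -/
def stieltjesIntegral1 (T : ℝ) (x : ℝ → ℝ) (η : ℝ → ℝ) (t : ℝ) : ℝ :=
  (∫ s in Ioc 0 t, x s ∂(lsMeasure (fun u => varFun T η u + clampFun T η u))) -
    ∫ s in Ioc 0 t, x s ∂(lsMeasure (varFun T η))

/-- The coordinatewise Lebesgue–Stieltjes integral `∫_0^t ⟨x(s), dη(s)⟩` for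
`ℝ^d`-valued `x` and `η`. -/
def stieltjesIntegral (T : ℝ) {d : ℕ} (x η : ℝ → EuclideanSpace ℝ (Fin d)) (t : ℝ) : ℝ :=
  ∑ i, stieltjesIntegral1 T (fun s => x s i) (fun s => η s i) t

/-- The BV norm `‖η‖_BV = |η(0)| + V_0^T(η)`. -/
def bvNorm (T : ℝ) {E : Type*} [NormedAddCommGroup E] (η : ℝ → E) : ℝ :=
  ‖η 0‖ + (eVariationOn η (Icc 0 T)).toReal

open Function
open scoped NNReal

section Limits

variable {ι α β : Type*} {l : Filter ι} {s : Set α}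

theorem tendstoUniformlyOn_finsetSum {κ : Type*} [AddCommGroup β] [UniformSpace β]
    [IsUniformAddGroup β] (u : Finset κ) {F : κ → ι → α → β} {f : κ → α → β}
    (h : ∀ k ∈ u, TendstoUniformlyOn (F k) (f k) l s) :
    TendstoUniformlyOn (fun i x => ∑ k ∈ u, F k i x) (fun x => ∑ k ∈ u, f k x) l s := by
  induction u using Finset.induction_on with
  | empty => simpa using (tendsto_const_nhds (x := (0 : β))).tendstoUniformlyOn_const s
  | insert k u hk ih =>
    simp only [Finset.sum_insert hk]
    exact (h k (Finset.mem_insert_self k u)).fun_add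
      (ih fun j hj => h j (Finset.mem_insert_of_mem hj))

theorem eVariationOn_le_of_tendsto [LinearOrder α] [PseudoEMetricSpace β] [l.NeBot]
    {F : ι → α → β} {f : α → β} (hF : ∀ x ∈ s, Tendsto (fun i => F i x) l (𝓝 (f x)))
    {v : ℝ≥0∞} (hv : ∀ᶠ i in l, eVariationOn (F i) s ≤ v) : eVariationOn f s ≤ v :=
  le_of_not_gt fun h => ((eVariationOn.lowerSemicontinuous_aux hF h).and hv).exists.elim
    fun _ hi => hi.2.not_gt hi.1

variable [PseudoMetricSpace β]

theorem tendstoUniformlyOn_of_forall_approx {F : ι → α → β} {f : α → β}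
    (h : ∀ ε > 0, ∃ G : ι → α → β, ∃ g : α → β, TendstoUniformlyOn G g l s ∧
      (∀ᶠ i in l, ∀ x ∈ s, dist (F i x) (G i x) ≤ ε) ∧ ∀ x ∈ s, dist (f x) (g x) ≤ ε) :
    TendstoUniformlyOn F f l s := by
  rw [Metric.tendstoUniformlyOn_iff]
  intro ε hε
  obtain ⟨G, g, hGg, hFG, hfg⟩ := h (ε / 4) (by positivity)
  filter_upwards [Metric.tendstoUniformlyOn_iff.1 hGg (ε / 4) (by positivity), hFG]
    with i hGi hFi x hx
  calc dist (f x) (F i x) ≤ dist (f x) (g x) + dist (g x) (G i x) + dist (F i x) (G i x) := by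
        rw [dist_comm (F i x)]; exact dist_triangle4 _ _ _ _
    _ < ε := by linarith [hfg x hx, hGi x hx, hFi x hx]

theorem TendstoUniformlyOn.of_dist_le_mul {γ δ : Type*} [PseudoMetricSpace γ] {f : ι → α → β}
    {g : α → β} {F : ι → δ → γ} {G : δ → γ} {t : Set δ} (hf : TendstoUniformlyOn f g l s)
    (L : ℝ) (h : ∀ i, ∀ r > 0, (∀ a ∈ s, dist (g a) (f i a) ≤ r) →
      ∀ b ∈ t, dist (G b) (F i b) ≤ L * r) :
    TendstoUniformlyOn F G l t := by
  rw [Metric.tendstoUniformlyOn_iff]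
  intro ε hε
  have hr : 0 < ε / (|L| + 1) := by positivity
  filter_upwards [Metric.tendstoUniformlyOn_iff.1 hf _ hr] with i hi b hb
  calc dist (G b) (F i b) ≤ L * (ε / (|L| + 1)) := h i _ hr (fun a ha => (hi a ha).le) b hb
    _ ≤ |L| * (ε / (|L| + 1)) := by gcongr; exact le_abs_self L
    _ < (|L| + 1) * (ε / (|L| + 1)) := by gcongr; linarith
    _ = ε := by field_simp

end Limits

section PartitionIntegral

theorem abs_setIntegral_sub_setIntegral_le {X : Type*} [MeasurableSpace X] {μ ν : Measure X}
    {s : Set X} (hμ : μ s < ∞) (hν : ν s < ∞) {f : X → ℝ} {C : ℝ} (hf : ∀ x ∈ s, |f x| ≤ C) :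
    |∫ x in s, f x ∂μ - ∫ x in s, f x ∂ν| ≤ C * (μ.real s + ν.real s) := by
  simp only [← Real.norm_eq_abs] at hf ⊢
  have hμf := norm_setIntegral_le_of_norm_le_const hμ hf
  have hνf := norm_setIntegral_le_of_norm_le_const hν hf
  linarith [norm_sub_le (∫ x in s, f x ∂μ) (∫ x in s, f x ∂ν)]

theorem setIntegral_sub_mul_measureReal {X : Type*} [MeasurableSpace X] {ρ : Measure X}
    {s : Set X} {f : X → ℝ} (hf : IntegrableOn f s ρ) (hρ : ρ s < ∞) (c : ℝ) :
    ∫ x in s, f x ∂ρ - c * ρ.real s = ∫ x in s, (f x - c) ∂ρ := by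
  rw [integral_sub hf (integrableOn_const hρ.ne), setIntegral_const, smul_eq_mul, mul_comm]

variable {μ ν : Measure ℝ} {m : ℕ → ℝ} {K : ℕ}

theorem setIntegral_Ioc_eq_sum {E : Type*} [NormedAddCommGroup E] [NormedSpace ℝ E] {f : ℝ → E}
    (hm : Monotone m) (hf : IntegrableOn f (Ioc (m 0) (m K)) μ) :
    ∫ x in Ioc (m 0) (m K), f x ∂μ
      = ∑ k ∈ Finset.range K, ∫ x in Ioc (m k) (m (k + 1)), f x ∂μ := by
  have hpieces : ∀ k < K, IntervalIntegrable f μ (m k) (m (k + 1)) := fun k hk =>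
    (intervalIntegrable_iff_integrableOn_Ioc_of_le (hm k.le_succ)).2
      (hf.mono_set (Ioc_subset_Ioc (hm k.zero_le) (hm hk)))
  rw [← intervalIntegral.integral_of_le (hm K.zero_le),
    ← intervalIntegral.sum_integral_adjacent_intervals hpieces]
  exact Finset.sum_congr rfl fun k _ => intervalIntegral.integral_of_le (hm k.le_succ)

theorem measureReal_Ioc_eq_sum (hm : Monotone m) (hμ : μ (Ioc (m 0) (m K)) < ∞) :
    μ.real (Ioc (m 0) (m K)) = ∑ k ∈ Finset.range K, μ.real (Ioc (m k) (m (k + 1))) := by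
  simpa using setIntegral_Ioc_eq_sum (f := fun _ => (1 : ℝ)) hm (integrableOn_const hμ.ne)

theorem abs_setIntegral_sub_setIntegral_sub_sum_le (hm : Monotone m)
    (hμ : μ (Ioc (m 0) (m K)) < ∞) (hν : ν (Ioc (m 0) (m K)) < ∞) {f : ℝ → ℝ}
    (hfμ : IntegrableOn f (Ioc (m 0) (m K)) μ) (hfν : IntegrableOn f (Ioc (m 0) (m K)) ν)
    {c : ℕ → ℝ} {ε : ℝ} (hc : ∀ k < K, ∀ x ∈ Ioc (m k) (m (k + 1)), |f x - c k| ≤ ε) :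
    |(∫ x in Ioc (m 0) (m K), f x ∂μ - ∫ x in Ioc (m 0) (m K), f x ∂ν) -
        ∑ k ∈ Finset.range K,
          c k * (μ.real (Ioc (m k) (m (k + 1))) - ν.real (Ioc (m k) (m (k + 1))))|
      ≤ ε * (μ.real (Ioc (m 0) (m K)) + ν.real (Ioc (m 0) (m K))) := by
  have hsub : ∀ k < K, Ioc (m k) (m (k + 1)) ⊆ Ioc (m 0) (m K) := fun k hk =>
    Ioc_subset_Ioc (hm k.zero_le) (hm hk)
  have hpiece : ∀ k ∈ Finset.range K,
      |(∫ x in Ioc (m k) (m (k + 1)), f x ∂μ - ∫ x in Ioc (m k) (m (k + 1)), f x ∂ν) -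
          c k * (μ.real (Ioc (m k) (m (k + 1))) - ν.real (Ioc (m k) (m (k + 1))))|
        ≤ ε * (μ.real (Ioc (m k) (m (k + 1))) + ν.real (Ioc (m k) (m (k + 1)))) := by
    intro k hk
    rw [Finset.mem_range] at hk
    have hμk := (measure_mono (hsub k hk)).trans_lt hμ
    have hνk := (measure_mono (hsub k hk)).trans_lt hν
    have key := abs_setIntegral_sub_setIntegral_le hμk hνk (hc k hk)
    rw [← setIntegral_sub_mul_measureReal (hfμ.mono_set (hsub k hk)) hμk,
      ← setIntegral_sub_mul_measureReal (hfν.mono_set (hsub k hk)) hνk] at key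
    convert key using 2
    ring
  rw [setIntegral_Ioc_eq_sum hm hfμ, setIntegral_Ioc_eq_sum hm hfν, measureReal_Ioc_eq_sum hm hμ,
    measureReal_Ioc_eq_sum hm hν, ← Finset.sum_sub_distrib, ← Finset.sum_sub_distrib,
    ← Finset.sum_add_distrib, Finset.mul_sum]
  exact (Finset.abs_sum_le_sum_abs _ _).trans (Finset.sum_le_sum hpiece)

end PartitionIntegral

section VariationMeasures

variable {T : ℝ} {η : ℝ → ℝ}

instance (f : ℝ → ℝ) : IsLocallyFiniteMeasure (lsMeasure f) := by
  unfold lsMeasure; split <;> infer_instance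

theorem lsMeasure_real_Ioc {f : ℝ → ℝ} (hf : Monotone f) {a b : ℝ} (hab : a ≤ b) :
    (lsMeasure f).real (Ioc a b) = rightLim f b - rightLim f a := by
  rw [measureReal_def, lsMeasure, dif_pos hf, StieltjesFunction.measure_Ioc]
  exact ENNReal.toReal_ofReal (sub_nonneg.2 (hf.rightLim hab))

theorem clamp_mem (hT : 0 ≤ T) (t : ℝ) : min (max t 0) T ∈ Icc 0 T :=
  ⟨le_min (le_max_right _ _) hT, min_le_right _ _⟩

theorem monotone_clamp : Monotone fun t : ℝ => min (max t 0) T :=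
  fun _ _ h => min_le_min (max_le_max h le_rfl) le_rfl

theorem continuous_clampFun (hT : 0 ≤ T) (hc : ContinuousOn η (Icc 0 T)) :
    Continuous (clampFun T η) :=
  hc.comp_continuous ((continuous_id.max continuous_const).min continuous_const) (clamp_mem hT)

theorem varFun_sub_varFun (hT : 0 ≤ T) (hbv : BoundedVariationOn η (Icc 0 T)) {a b : ℝ}
    (hab : a ≤ b) :
    varFun T η b - varFun T η a
      = (eVariationOn η (Icc (min (max a 0) T) (min (max b 0) T))).toReal := by
  have hadd := eVariationOn.Icc_add_Icc η (s := univ) (clamp_mem hT a).1 (monotone_clamp hab)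
    (mem_univ _)
  simp only [univ_inter] at hadd
  have hfin : ∀ {u v : ℝ}, 0 ≤ u → v ≤ T → eVariationOn η (Icc u v) ≠ ∞ := fun hu hv =>
    ne_top_of_le_ne_top hbv (eVariationOn.mono η (Icc_subset_Icc hu hv))
  rw [varFun, varFun, ← hadd, ENNReal.toReal_add (hfin le_rfl (clamp_mem hT a).2)
    (hfin (clamp_mem hT a).1 (clamp_mem hT b).2), add_sub_cancel_left]

theorem abs_clampFun_sub_le (hT : 0 ≤ T) (hbv : BoundedVariationOn η (Icc 0 T)) {a b : ℝ}
    (hab : a ≤ b) : |clampFun T η b - clampFun T η a| ≤ varFun T η b - varFun T η a := by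
  rw [varFun_sub_varFun hT hbv hab]
  have hbv' : BoundedVariationOn η (Icc (min (max a 0) T) (min (max b 0) T)) :=
    ne_top_of_le_ne_top hbv
      (eVariationOn.mono η (Icc_subset_Icc (clamp_mem hT a).1 (clamp_mem hT b).2))
  simpa [Real.dist_eq, clampFun] using
    hbv'.dist_le ⟨monotone_clamp hab, le_rfl⟩ ⟨le_rfl, monotone_clamp hab⟩

theorem monotone_varFun (hT : 0 ≤ T) (hbv : BoundedVariationOn η (Icc 0 T)) :
    Monotone (varFun T η) := fun _ _ hab =>
  sub_nonneg.1 ((abs_nonneg _).trans (abs_clampFun_sub_le hT hbv hab))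

theorem monotone_varFun_add_clampFun (hT : 0 ≤ T) (hbv : BoundedVariationOn η (Icc 0 T)) :
    Monotone fun u => varFun T η u + clampFun T η u := fun a b hab => by
  linarith [abs_clampFun_sub_le hT hbv hab, neg_abs_le (clampFun T η b - clampFun T η a)]

theorem varFun_le (hT : 0 ≤ T) (hbv : BoundedVariationOn η (Icc 0 T)) (t : ℝ) :
    varFun T η t ≤ (eVariationOn η (Icc 0 T)).toReal :=
  ENNReal.toReal_mono hbv (eVariationOn.mono η (Icc_subset_Icc le_rfl (clamp_mem hT t).2))

abbrev variationAddMeasure (T : ℝ) (η : ℝ → ℝ) : Measure ℝ :=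
  lsMeasure fun u => varFun T η u + clampFun T η u

abbrev variationMeasure (T : ℝ) (η : ℝ → ℝ) : Measure ℝ :=
  lsMeasure (varFun T η)

theorem stieltjesIntegral1_eq (ψ : ℝ → ℝ) (t : ℝ) :
    stieltjesIntegral1 T ψ η t = ∫ s in Ioc 0 t, ψ s ∂variationAddMeasure T η
      - ∫ s in Ioc 0 t, ψ s ∂variationMeasure T η :=
  rfl

theorem variationAddMeasure_real_Ioc (hT : 0 ≤ T) (hbv : BoundedVariationOn η (Icc 0 T))
    (hc : ContinuousOn η (Icc 0 T)) {a b : ℝ} (hab : a ≤ b) :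
    (variationAddMeasure T η).real (Ioc a b)
      = rightLim (varFun T η) b + clampFun T η b - (rightLim (varFun T η) a + clampFun T η a) := by
  have hlim : ∀ u, rightLim (fun u => varFun T η u + clampFun T η u) u
      = rightLim (varFun T η) u + clampFun T η u := fun u =>
    rightLim_eq_of_tendsto (((monotone_varFun hT hbv).tendsto_rightLim u).add
      (((continuous_clampFun hT hc).tendsto u).mono_left nhdsWithin_le_nhds))
  rw [lsMeasure_real_Ioc (monotone_varFun_add_clampFun hT hbv) hab, hlim, hlim]

theorem variationMeasure_real_Ioc (hT : 0 ≤ T) (hbv : BoundedVariationOn η (Icc 0 T)) {a b : ℝ}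
    (hab : a ≤ b) :
    (variationMeasure T η).real (Ioc a b) = rightLim (varFun T η) b - rightLim (varFun T η) a :=
  lsMeasure_real_Ioc (monotone_varFun hT hbv) hab

theorem variationAddMeasure_real_sub_variationMeasure_real (hT : 0 ≤ T)
    (hbv : BoundedVariationOn η (Icc 0 T)) (hc : ContinuousOn η (Icc 0 T)) {a b : ℝ}
    (hab : a ≤ b) :
    (variationAddMeasure T η).real (Ioc a b) - (variationMeasure T η).real (Ioc a b)
      = clampFun T η b - clampFun T η a := by
  rw [variationAddMeasure_real_Ioc hT hbv hc hab, variationMeasure_real_Ioc hT hbv hab]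
  ring

theorem variationAddMeasure_real_add_variationMeasure_real_le (hT : 0 ≤ T)
    (hbv : BoundedVariationOn η (Icc 0 T)) (hc : ContinuousOn η (Icc 0 T)) {a b : ℝ}
    (hab : a ≤ b) :
    (variationAddMeasure T η).real (Ioc a b) + (variationMeasure T η).real (Ioc a b)
      ≤ 3 * (eVariationOn η (Icc 0 T)).toReal := by
  have hmono := monotone_varFun hT hbv
  have hb : rightLim (varFun T η) b ≤ (eVariationOn η (Icc 0 T)).toReal :=
    (hmono.rightLim_le (lt_add_one b)).trans (varFun_le hT hbv _)
  have ha : 0 ≤ rightLim (varFun T η) a := ENNReal.toReal_nonneg.trans (hmono.le_rightLim le_rfl)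
  have hη := (le_abs_self _).trans (abs_clampFun_sub_le hT hbv hab)
  have hva : 0 ≤ varFun T η a := ENNReal.toReal_nonneg
  rw [variationAddMeasure_real_Ioc hT hbv hc hab, variationMeasure_real_Ioc hT hbv hab]
  linarith [varFun_le hT hbv b]

end VariationMeasures

section StieltjesIntegral

variable {T : ℝ} {η : ℝ → ℝ}

theorem stieltjesIntegral1_sub {ψ φ : ℝ → ℝ} (hψ : ContinuousOn ψ (Icc 0 T))
    (hφ : ContinuousOn φ (Icc 0 T)) {t : ℝ} (ht : t ≤ T) :
    stieltjesIntegral1 T ψ η t - stieltjesIntegral1 T φ η t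
      = stieltjesIntegral1 T (fun u => ψ u - φ u) η t := by
  have hsub : Ioc 0 t ⊆ Icc 0 T := Ioc_subset_Icc_self.trans (Icc_subset_Icc_right ht)
  have hint : ∀ {f : ℝ → ℝ}, ContinuousOn f (Icc 0 T) → ∀ μ : Measure ℝ,
      [IsLocallyFiniteMeasure μ] → IntegrableOn f (Ioc 0 t) μ := fun hf μ _ =>
    (hf.integrableOn_compact isCompact_Icc).mono_set hsub
  simp only [stieltjesIntegral1_eq]
  rw [integral_sub (hint hψ _) (hint hφ _), integral_sub (hint hψ _) (hint hφ _)]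
  ring

theorem abs_stieltjesIntegral1_le (hT : 0 ≤ T) {V : ℝ≥0} (hV : eVariationOn η (Icc 0 T) ≤ V)
    (hc : ContinuousOn η (Icc 0 T)) {ψ : ℝ → ℝ} {C : ℝ} (hψ : ∀ u ∈ Icc 0 T, |ψ u| ≤ C) {t : ℝ}
    (ht : t ∈ Icc 0 T) : |stieltjesIntegral1 T ψ η t| ≤ 3 * C * V := by
  have hbv : BoundedVariationOn η (Icc 0 T) := ne_top_of_le_ne_top ENNReal.coe_ne_top hV
  have hC : 0 ≤ C := (abs_nonneg _).trans (hψ 0 ⟨le_rfl, hT⟩)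
  have hsub : Ioc 0 t ⊆ Icc 0 T := Ioc_subset_Icc_self.trans (Icc_subset_Icc_right ht.2)
  rw [stieltjesIntegral1_eq]
  calc _ ≤ C * ((variationAddMeasure T η).real (Ioc 0 t) + (variationMeasure T η).real (Ioc 0 t)) :=
        abs_setIntegral_sub_setIntegral_le measure_Ioc_lt_top measure_Ioc_lt_top
          fun u hu => hψ u (hsub hu)
    _ ≤ C * (3 * V) := by
        gcongr
        exact (variationAddMeasure_real_add_variationMeasure_real_le hT hbv hc ht.1).trans
          (by gcongr; exact ENNReal.toReal_le_coe_of_le_coe hV)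
    _ = 3 * C * V := by ring

def riemannStieltjesSum (T : ℝ) (ψ η : ℝ → ℝ) (K : ℕ) (t : ℝ) : ℝ :=
  ∑ k ∈ Finset.range K,
    ψ (k * t / K) * (clampFun T η ((k + 1 : ℕ) * t / K) - clampFun T η (k * t / K))

theorem abs_stieltjesIntegral1_sub_sum_le (hT : 0 ≤ T) {V : ℝ≥0}
    (hV : eVariationOn η (Icc 0 T) ≤ V) (hc : ContinuousOn η (Icc 0 T)) {ψ : ℝ → ℝ}
    (hψ : ContinuousOn ψ (Icc 0 T)) {m : ℕ → ℝ} (hm : Monotone m) {K : ℕ} (hm0 : m 0 = 0)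
    (hmK : m K ≤ T) {c : ℕ → ℝ} {ε : ℝ} (hε : 0 ≤ ε)
    (hclose : ∀ k < K, ∀ s ∈ Ioc (m k) (m (k + 1)), |ψ s - c k| ≤ ε) :
    |stieltjesIntegral1 T ψ η (m K)
        - ∑ k ∈ Finset.range K, c k * (clampFun T η (m (k + 1)) - clampFun T η (m k))|
      ≤ 3 * ε * V := by
  have hbv : BoundedVariationOn η (Icc 0 T) := ne_top_of_le_ne_top ENNReal.coe_ne_top hV
  have hint : ∀ μ : Measure ℝ, [IsLocallyFiniteMeasure μ] → IntegrableOn ψ (Ioc (m 0) (m K)) μ :=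
    fun μ _ => (hψ.integrableOn_compact isCompact_Icc).mono_set
      (Ioc_subset_Icc_self.trans (Icc_subset_Icc hm0.ge hmK))
  have hriemann := abs_setIntegral_sub_setIntegral_sub_sum_le (μ := variationAddMeasure T η)
    (ν := variationMeasure T η) hm measure_Ioc_lt_top measure_Ioc_lt_top (hint _) (hint _) hclose
  have hsum : ∀ k ∈ Finset.range K, c k * (clampFun T η (m (k + 1)) - clampFun T η (m k))
      = c k * ((variationAddMeasure T η).real (Ioc (m k) (m (k + 1)))
        - (variationMeasure T η).real (Ioc (m k) (m (k + 1)))) := fun k _ => by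
    rw [variationAddMeasure_real_sub_variationMeasure_real hT hbv hc (hm k.le_succ)]
  rw [hm0] at hriemann
  rw [stieltjesIntegral1_eq, Finset.sum_congr rfl hsum]
  refine hriemann.trans ?_
  calc _ ≤ ε * (3 * V) := by
        gcongr
        exact (variationAddMeasure_real_add_variationMeasure_real_le hT hbv hc
          (hm0 ▸ hm K.zero_le)).trans (by gcongr; exact ENNReal.toReal_le_coe_of_le_coe hV)
    _ = 3 * ε * V := by ring

theorem abs_stieltjesIntegral1_sub_riemannStieltjesSum_le (hT : 0 ≤ T) {V : ℝ≥0}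
    (hV : eVariationOn η (Icc 0 T) ≤ V) (hc : ContinuousOn η (Icc 0 T)) {ψ : ℝ → ℝ}
    (hψ : ContinuousOn ψ (Icc 0 T)) {K : ℕ} (hK : K ≠ 0) {ε : ℝ}
    (hosc : ∀ s ∈ Icc 0 T, ∀ u ∈ Icc 0 T, dist s u ≤ T / K → dist (ψ s) (ψ u) ≤ ε) {t : ℝ}
    (ht : t ∈ Icc 0 T) :
    |stieltjesIntegral1 T ψ η t - riemannStieltjesSum T ψ η K t| ≤ 3 * ε * V := by
  have hε : 0 ≤ ε := by
    simpa using hosc 0 ⟨le_rfl, hT⟩ 0 ⟨le_rfl, hT⟩ (by simp only [dist_self]; positivity)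
  set m : ℕ → ℝ := fun k => k * t / K with hm_def
  have hm : Monotone m := fun i j hij => by
    have := ht.1
    simp only [hm_def]; gcongr
  have hm0 : m 0 = 0 := by simp [hm_def]
  have hmK : m K = t := by simp only [hm_def]; field_simp
  have hstep : ∀ k, m (k + 1) - m k ≤ T / K := fun k => by
    simp only [hm_def]; push_cast
    rw [← sub_div, add_mul, one_mul, add_sub_cancel_left]; gcongr; exact ht.2
  have hclose : ∀ k < K, ∀ s ∈ Ioc (m k) (m (k + 1)), |ψ s - ψ (m k)| ≤ ε := fun k hk s hs => by
    have hmk : 0 ≤ m k := hm0 ▸ hm k.zero_le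
    have hmk' : m (k + 1) ≤ T := (hm hk).trans (hmK.symm ▸ ht.2)
    rw [← Real.dist_eq]
    refine hosc s ⟨by linarith [hs.1], by linarith [hs.2]⟩ (m k) ⟨hmk, by linarith [hs.1, hs.2]⟩ ?_
    rw [Real.dist_eq, abs_of_nonneg (by linarith [hs.1])]
    linarith [hs.2, hstep k]
  have key := abs_stieltjesIntegral1_sub_sum_le hT hV hc hψ hm hm0 (hmK.trans_le ht.2) hε hclose
  rwa [hmK] at key

theorem abs_riemannStieltjesSum_sub_le (hT : 0 ≤ T) {ψ η' : ℝ → ℝ} {C δ : ℝ}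
    (hψ : ∀ u ∈ Icc 0 T, |ψ u| ≤ C) (hη : ∀ u ∈ Icc 0 T, |η u - η' u| ≤ δ) (K : ℕ) {t : ℝ}
    (ht : t ∈ Icc 0 T) :
    |riemannStieltjesSum T ψ η K t - riemannStieltjesSum T ψ η' K t| ≤ K * (C * (2 * δ)) := by
  have hclamp : ∀ r, |clampFun T η r - clampFun T η' r| ≤ δ := fun r => hη _ (clamp_mem hT r)
  have hterm : ∀ k ∈ Finset.range K,
      |ψ (k * t / K) * (clampFun T η ((k + 1 : ℕ) * t / K) - clampFun T η (k * t / K))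
        - ψ (k * t / K) * (clampFun T η' ((k + 1 : ℕ) * t / K) - clampFun T η' (k * t / K))|
      ≤ C * (2 * δ) := fun k hk => by
    have htag : (k : ℝ) * t / K ∈ Icc 0 T := by
      have hk' : (k : ℝ) ≤ K := Nat.cast_le.2 (Finset.mem_range.1 hk).le
      refine ⟨by have := ht.1; positivity, ?_⟩
      rw [div_le_iff₀ (Nat.cast_pos.2 (Nat.zero_lt_of_lt (Finset.mem_range.1 hk)))]
      nlinarith [ht.1, ht.2]
    rw [← mul_sub, abs_mul]
    gcongr
    · exact (abs_nonneg _).trans (hψ 0 ⟨le_rfl, hT⟩)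
    · exact hψ _ htag
    · have h1 := hclamp ((k + 1 : ℕ) * t / K)
      have h2 := hclamp (k * t / K)
      rw [abs_le] at h1 h2 ⊢
      constructor <;> linarith
  rw [riemannStieltjesSum, riemannStieltjesSum, ← Finset.sum_sub_distrib]
  refine (Finset.abs_sum_le_sum_abs _ _).trans ((Finset.sum_le_sum hterm).trans ?_)
  rw [Finset.sum_const, Finset.card_range, nsmul_eq_mul]

end StieltjesIntegral

section Convergence

variable {T : ℝ}

theorem tendstoUniformlyOn_stieltjesIntegral1_sub (hT : 0 ≤ T) {x : ℕ → ℝ → ℝ} {x₀ : ℝ → ℝ}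
    (hxc : ∀ n, ContinuousOn (x n) (Icc 0 T)) (hx₀c : ContinuousOn x₀ (Icc 0 T))
    (hxu : TendstoUniformlyOn x x₀ atTop (Icc 0 T)) {η : ℕ → ℝ → ℝ}
    (hηc : ∀ n, ContinuousOn (η n) (Icc 0 T)) {M : ℝ≥0}
    (hM : ∀ n, eVariationOn (η n) (Icc 0 T) ≤ M) :
    TendstoUniformlyOn
      (fun n t => stieltjesIntegral1 T (x n) (η n) t - stieltjesIntegral1 T x₀ (η n) t)
      (fun _ => 0) atTop (Icc 0 T) :=
  hxu.of_dist_le_mul (3 * M) fun n r _ hr t ht => by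
    have hxr : ∀ u ∈ Icc 0 T, |x n u - x₀ u| ≤ r := fun u hu => by
      rw [← Real.dist_eq, dist_comm]; exact hr u hu
    rw [dist_zero_left, Real.norm_eq_abs, stieltjesIntegral1_sub (hxc n) hx₀c ht.2]
    linarith [abs_stieltjesIntegral1_le hT (hM n) (hηc n) hxr ht]

theorem tendstoUniformlyOn_stieltjesIntegral1_right (hT : 0 ≤ T) {ψ : ℝ → ℝ}
    (hψ : ContinuousOn ψ (Icc 0 T)) {η : ℕ → ℝ → ℝ} {η₀ : ℝ → ℝ}
    (hηc : ∀ n, ContinuousOn (η n) (Icc 0 T)) (hη₀c : ContinuousOn η₀ (Icc 0 T))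
    (hηu : TendstoUniformlyOn η η₀ atTop (Icc 0 T)) {M : ℝ≥0}
    (hM : ∀ n, eVariationOn (η n) (Icc 0 T) ≤ M) (hM₀ : eVariationOn η₀ (Icc 0 T) ≤ M) :
    TendstoUniformlyOn (fun n => stieltjesIntegral1 T ψ (η n)) (stieltjesIntegral1 T ψ η₀)
      atTop (Icc 0 T) := by
  obtain ⟨C, hC⟩ := isCompact_Icc.exists_bound_of_continuousOn hψ
  refine tendstoUniformlyOn_of_forall_approx fun ε hε => ?_
  obtain ⟨δ, hδ, hψδ⟩ := Metric.uniformContinuousOn_iff_le.1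
    (isCompact_Icc.uniformContinuousOn_of_continuous hψ) (ε / (3 * M + 1)) (by positivity)
  obtain ⟨K, hK⟩ := exists_nat_gt (T / δ)
  have hKpos : (0 : ℝ) < K := (div_nonneg hT hδ.le).trans_lt hK
  have hosc : ∀ s ∈ Icc 0 T, ∀ u ∈ Icc 0 T, dist s u ≤ T / K →
      dist (ψ s) (ψ u) ≤ ε / (3 * M + 1) := fun s hs u hu hsu => by
    refine hψδ s hs u hu (hsu.trans ((div_le_iff₀ hKpos).2 ?_))
    rw [div_lt_iff₀ hδ] at hK
    linarith
  have happrox : ∀ η' : ℝ → ℝ, ContinuousOn η' (Icc 0 T) → eVariationOn η' (Icc 0 T) ≤ M →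
      ∀ t ∈ Icc 0 T, dist (stieltjesIntegral1 T ψ η' t) (riemannStieltjesSum T ψ η' K t) ≤ ε :=
    fun η' hc hV t ht => by
      rw [Real.dist_eq]
      refine (abs_stieltjesIntegral1_sub_riemannStieltjesSum_le hT hV hc hψ
        (Nat.cast_pos.1 hKpos).ne' hosc ht).trans ?_
      rw [show 3 * (ε / (3 * M + 1)) * M = ε * (3 * M / (3 * M + 1)) by ring]
      exact mul_le_of_le_one_right hε.le ((div_le_one (by positivity)).2 (by linarith))
  refine ⟨fun n => riemannStieltjesSum T ψ (η n) K, riemannStieltjesSum T ψ η₀ K, ?_,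
    Eventually.of_forall fun n => happrox _ (hηc n) (hM n), happrox _ hη₀c hM₀⟩
  refine hηu.of_dist_le_mul (K * (C * 2)) fun n r _ hr t ht => ?_
  have hηr : ∀ u ∈ Icc 0 T, |η₀ u - η n u| ≤ r := fun u hu => by
    rw [← Real.dist_eq]; exact hr u hu
  rw [Real.dist_eq]
  linarith [abs_riemannStieltjesSum_sub_le hT (fun u hu => (hC u hu)) hηr K ht]

theorem tendstoUniformlyOn_stieltjesIntegral1 (hT : 0 ≤ T) {x : ℕ → ℝ → ℝ} {x₀ : ℝ → ℝ}
    (hxc : ∀ n, ContinuousOn (x n) (Icc 0 T)) (hx₀c : ContinuousOn x₀ (Icc 0 T))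
    (hxu : TendstoUniformlyOn x x₀ atTop (Icc 0 T)) {η : ℕ → ℝ → ℝ} {η₀ : ℝ → ℝ}
    (hηc : ∀ n, ContinuousOn (η n) (Icc 0 T)) (hηu : TendstoUniformlyOn η η₀ atTop (Icc 0 T))
    {M : ℝ≥0} (hM : ∀ n, eVariationOn (η n) (Icc 0 T) ≤ M) :
    TendstoUniformlyOn (fun n => stieltjesIntegral1 T (x n) (η n)) (stieltjesIntegral1 T x₀ η₀)
      atTop (Icc 0 T) := by
  have hη₀c : ContinuousOn η₀ (Icc 0 T) := hηu.continuousOn (Frequently.of_forall hηc)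
  have hM₀ : eVariationOn η₀ (Icc 0 T) ≤ M :=
    eVariationOn_le_of_tendsto (fun _ hu => hηu.tendsto_at hu) (Eventually.of_forall hM)
  simpa using (tendstoUniformlyOn_stieltjesIntegral1_sub hT hxc hx₀c hxu hηc hM).fun_add
    (tendstoUniformlyOn_stieltjesIntegral1_right hT hx₀c hηc hη₀c hηu hM hM₀)

end Convergence

theorem PiLp.lipschitzWith_apply {p : ℝ≥0∞} [Fact (1 ≤ p)] {ι : Type*} [Fintype ι]
    {β : ι → Type*} [∀ i, PseudoMetricSpace (β i)] (i : ι) :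
    LipschitzWith 1 fun x : PiLp p β => x i :=
  LipschitzWith.of_dist_le_mul fun x y => by simpa using PiLp.dist_apply_le x y i

theorem eVariationOn_le_ofReal_of_bvNorm_le {E : Type*} [NormedAddCommGroup E] {T M : ℝ}
    {η : ℝ → E} (hbv : BoundedVariationOn η (Icc 0 T)) (hM : bvNorm T η ≤ M) :
    eVariationOn η (Icc 0 T) ≤ ENNReal.ofReal M := by
  rw [← ENNReal.ofReal_toReal hbv]
  exact ENNReal.ofReal_le_ofReal (by rw [bvNorm] at hM; linarith [norm_nonneg (η 0)])

/-- If `xₙ → x` uniformly on `[0,T]` (continuous), `ηₙ → η` uniformly on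
`[0,T]` with `ηₙ` continuous of bounded variation and `M := sup_n ‖ηₙ‖_BV < ∞`, then
`t ↦ ∫_0^t ⟨xₙ(s), dηₙ(s)⟩` converges uniformly on `[0,T]` to `t ↦ ∫_0^t ⟨x(s), dη(s)⟩`. -/
theorem stmt2 {d : ℕ} (T : ℝ) (hT : 0 < T)
    (x : ℕ → ℝ → EuclideanSpace ℝ (Fin d)) (x₀ : ℝ → EuclideanSpace ℝ (Fin d))
    (hxc : ∀ n, ContinuousOn (x n) (Icc 0 T)) (hx₀c : ContinuousOn x₀ (Icc 0 T))
    (hxu : TendstoUniformlyOn x x₀ atTop (Icc 0 T))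
    (η : ℕ → ℝ → EuclideanSpace ℝ (Fin d)) (η₀ : ℝ → EuclideanSpace ℝ (Fin d))
    (hηc : ∀ n, ContinuousOn (η n) (Icc 0 T))
    (hηbv : ∀ n, BoundedVariationOn (η n) (Icc 0 T))
    (hηu : TendstoUniformlyOn η η₀ atTop (Icc 0 T))
    (M : ℝ) (hM : ∀ n, bvNorm T (η n) ≤ M) :
    TendstoUniformlyOn (fun n t => stieltjesIntegral T (x n) (η n) t)
      (fun t => stieltjesIntegral T x₀ η₀ t) atTop (Icc 0 T) := by
  refine tendstoUniformlyOn_finsetSum Finset.univ fun i _ => ?_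
  have hi := PiLp.lipschitzWith_apply (p := 2) (β := fun _ : Fin d => ℝ) i
  have hV : ∀ n, eVariationOn (fun s => η n s i) (Icc 0 T) ≤ M.toNNReal := fun n => by
    refine (hi.lipschitzOnWith.comp_eVariationOn_le (mapsTo_univ _ _)).trans ?_
    rw [ENNReal.coe_one, one_mul]
    exact eVariationOn_le_ofReal_of_bvNorm_le (hηbv n) (hM n)
  exact tendstoUniformlyOn_stieltjesIntegral1 hT.le
    (fun n => hi.continuous.comp_continuousOn (hxc n)) (hi.continuous.comp_continuousOn hx₀c)
    (hi.uniformContinuous.comp_tendstoUniformlyOn hxu)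
    (fun n => hi.continuous.comp_continuousOn (hηc n))
    (hi.uniformContinuous.comp_tendstoUniformlyOn hηu) hV

end
end

section
/- Let (R_n)_{n≥1} be a sequence of probability measures on a metric space S converging weakly to R_0, let (V_ν)_{ν>0} be an increasing family of closed subsets of S with lim_{ν→∞} inf_{n≥1} R_n(V_ν) = 1, and let f : S → ℝ be a bounded function (bounded by M) such that for every ν the restriction f|_{V_ν} is continuous and extends to a continuous function Φ_ν : S → ℝ bounded by M. Then ∫ f dR_n → ∫ f dR_0. -/
open MeasureTheory Set Filter Topology
open scoped ENNReal

/-!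
On `V_ν` the function `f` coincides with the bounded continuous `Φ_ν`, so for every probability
measure `μ` we have `|∫ f dμ - ∫ Φ_ν dμ| ≤ 2M μ(V_νᶜ)`. The hypothesis makes `sup_n R_n(V_νᶜ)`
small for large `ν`, and the portmanteau theorem (applied to the open set `V_νᶜ`) bounds
`R_0(V_νᶜ)` by the same quantity. Hence `∫ f dR_n` is uniformly approximated, along with its
candidate limit, by the convergent sequences `∫ Φ_ν dR_n`.
-/

theorem tendsto_of_forall_dist_le_of_tendsto {α ι κ : Type*} [PseudoMetricSpace α]
    {L : Filter ι} {l : Filter κ} [l.NeBot] {u : ι → α} {a : α} {v : κ → ι → α} {b : κ → α}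
    {e : κ → ℝ} (he : Tendsto e l (𝓝 0)) (hv : ∀ k, Tendsto (v k) L (𝓝 (b k)))
    (hu : ∀ k i, dist (u i) (v k i) ≤ e k) (ha : ∀ k, dist (b k) a ≤ e k) :
    Tendsto u L (𝓝 a) := by
  refine Metric.tendsto_nhds.2 fun ε hε => ?_
  obtain ⟨k, hk⟩ := (he.eventually (gt_mem_nhds (by positivity : (0 : ℝ) < ε / 3))).exists
  filter_upwards [Metric.tendsto_nhds.1 (hv k) (ε / 3) (by positivity)] with i hi
  calc dist (u i) a ≤ dist (u i) (v k i) + dist (v k i) (b k) + dist (b k) a :=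
        dist_triangle4 _ _ _ _
    _ < ε := by linarith [hu k i, ha k]

theorem norm_integral_sub_integral_le_of_eqOn {α E : Type*} [MeasurableSpace α]
    [NormedAddCommGroup E] [NormedSpace ℝ E] {μ : Measure α} [IsFiniteMeasure μ] {s : Set α}
    {f g : α → E} (hf : Integrable f μ) (hg : Integrable g μ) (hfg : EqOn f g s) {M : ℝ}
    (hfM : ∀ x, ‖f x‖ ≤ M) (hgM : ∀ x, ‖g x‖ ≤ M) :
    ‖∫ x, f x ∂μ - ∫ x, g x ∂μ‖ ≤ 2 * M * μ.real sᶜ := by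
  have hvanish : ∀ x ∉ sᶜ, f x - g x = 0 := fun x hx => sub_eq_zero.2 (hfg (not_not.1 hx))
  rw [← integral_sub hf hg, ← setIntegral_eq_integral_of_forall_compl_eq_zero hvanish]
  refine norm_setIntegral_le_of_norm_le_const (measure_lt_top μ _) fun x _ => ?_
  linarith [norm_sub_le (f x) (g x), hfM x, hgM x]

theorem tendsto_iSup_measure_compl_of_tendsto_iInf {α ι κ : Type*} [MeasurableSpace α]
    {μ : ι → Measure α} [∀ i, IsProbabilityMeasure (μ i)] {V : κ → Set α}
    (hV : ∀ k, MeasurableSet (V k)) {l : Filter κ}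
    (h : Tendsto (fun k => ⨅ i, μ i (V k)) l (𝓝 1)) :
    Tendsto (fun k => ⨆ i, μ i (V k)ᶜ) l (𝓝 0) := by
  simp_rw [prob_compl_eq_one_sub (hV _), ← ENNReal.sub_iInf]
  simpa using ENNReal.Tendsto.sub tendsto_const_nhds h (.inl ENNReal.one_ne_top)

theorem measure_le_iSup_of_forall_integral_tendsto {Ω ι : Type*} [MeasurableSpace Ω]
    [TopologicalSpace Ω] [OpensMeasurableSpace Ω] [HasOuterApproxClosed Ω] {L : Filter ι}
    [L.NeBot] {μs : ι → Measure Ω} [∀ i, IsProbabilityMeasure (μs i)] {μ : Measure Ω}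
    [IsProbabilityMeasure μ]
    (h : ∀ Φ : BoundedContinuousFunction Ω ℝ, Tendsto (fun i => ∫ x, Φ x ∂μs i) L (𝓝 (∫ x, Φ x ∂μ)))
    {G : Set Ω} (hG : IsOpen G) :
    μ G ≤ ⨆ i, μs i G :=
  calc μ G ≤ L.liminf fun i => μs i G :=
        ProbabilityMeasure.le_liminf_measure_open_of_tendsto (μs := fun i => ⟨μs i, inferInstance⟩)
          (μ := ⟨μ, inferInstance⟩) (ProbabilityMeasure.tendsto_iff_forall_integral_tendsto.2 h) hG
    _ ≤ L.limsup fun i => μs i G := liminf_le_limsup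
    _ ≤ ⨆ i, μs i G := limsup_le_iSup

theorem stmt8_general {S : Type*} [MetricSpace S] [MeasurableSpace S] [BorelSpace S]
    (R : ℕ → Measure S) [∀ n, IsProbabilityMeasure (R n)]
    (R₀ : Measure S) [IsProbabilityMeasure R₀]
    (hweak : ∀ Φ : BoundedContinuousFunction S ℝ,
      Tendsto (fun n => ∫ s, Φ s ∂(R n)) atTop (𝓝 (∫ s, Φ s ∂(R₀))))
    (V : ℝ → Set S) (hVc : ∀ ν, IsClosed (V ν))
    (hV1 : Tendsto (fun ν : ℝ => ⨅ n, R n (V ν)) atTop (𝓝 (1 : ℝ≥0∞)))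
    (f : S → ℝ) (hf : Measurable f) (M : ℝ) (hfM : ∀ s, |f s| ≤ M)
    (hext : ∀ ν : ℝ, ContinuousOn f (V ν) ∧
      ∃ Φ : BoundedContinuousFunction S ℝ, (∀ s, |Φ s| ≤ M) ∧ ∀ s ∈ V ν, Φ s = f s) :
    Tendsto (fun n => ∫ s, f s ∂(R n)) atTop (𝓝 (∫ s, f s ∂(R₀))) := by
  choose _ Φ hΦM hΦf using hext
  set c : ℝ → ℝ≥0∞ := fun ν => ⨆ n, R n (V ν)ᶜ
  have hc : Tendsto c atTop (𝓝 0) :=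
    tendsto_iSup_measure_compl_of_tendsto_iInf (fun ν => (hVc ν).measurableSet) hV1
  have hM : 0 ≤ M := (abs_nonneg _).trans (hfM (nonempty_of_isProbabilityMeasure R₀).some)
  have hest : ∀ ν (μ : Measure S) [IsProbabilityMeasure μ], μ (V ν)ᶜ ≤ c ν →
      dist (∫ s, f s ∂μ) (∫ s, Φ ν s ∂μ) ≤ 2 * M * (c ν).toReal := by
    intro ν μ _ hμ
    have hfi : Integrable f μ := .of_bound hf.aestronglyMeasurable M (ae_of_all _ hfM)
    rw [dist_eq_norm]
    refine (norm_integral_sub_integral_le_of_eqOn hfi ((Φ ν).integrable μ)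
      (fun s hs => (hΦf ν s hs).symm) hfM (hΦM ν)).trans ?_
    gcongr
    exact ENNReal.toReal_mono (ne_top_of_le_ne_top ENNReal.one_ne_top
      (iSup_le fun n => prob_le_one)) hμ
  refine tendsto_of_forall_dist_le_of_tendsto (l := atTop) (v := fun ν n => ∫ s, Φ ν s ∂(R n))
    ?_ (fun ν => hweak (Φ ν)) (fun ν n => hest ν (R n) (le_iSup (fun n => R n (V ν)ᶜ) n))
    fun ν => ?_
  · simpa using ((ENNReal.tendsto_toReal ENNReal.zero_ne_top).comp hc).const_mul (2 * M)
  · rw [dist_comm]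
    exact hest ν R₀ (measure_le_iSup_of_forall_integral_tendsto hweak (hVc ν).isOpen_compl)

/-- If `Rₙ → R₀` weakly on a metric space `S`, `(V_ν)` is an increasing
family of closed sets with `inf_n Rₙ(V_ν) → 1` as `ν → ∞`, and `f : S → ℝ` is bounded by
`M` with each restriction `f|_{V_ν}` continuous and extendable to a continuous `Φ_ν : S → ℝ`
bounded by `M`, then `∫ f dRₙ → ∫ f dR₀`. -/
theorem stmt8 {S : Type*} [MetricSpace S] [MeasurableSpace S] [BorelSpace S]
    (R : ℕ → Measure S) [∀ n, IsProbabilityMeasure (R n)]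
    (R₀ : Measure S) [IsProbabilityMeasure R₀]
    (hweak : ∀ Φ : BoundedContinuousFunction S ℝ,
      Tendsto (fun n => ∫ s, Φ s ∂(R n)) atTop (𝓝 (∫ s, Φ s ∂(R₀))))
    (V : ℝ → Set S) (hVc : ∀ ν, IsClosed (V ν)) (hVm : Monotone V)
    (hV1 : Tendsto (fun ν : ℝ => ⨅ n, R n (V ν)) atTop (𝓝 (1 : ℝ≥0∞)))
    (f : S → ℝ) (hf : Measurable f) (M : ℝ) (hfM : ∀ s, |f s| ≤ M)
    (hext : ∀ ν : ℝ, ContinuousOn f (V ν) ∧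
      ∃ Φ : BoundedContinuousFunction S ℝ, (∀ s, |Φ s| ≤ M) ∧ ∀ s ∈ V ν, Φ s = f s) :
    Tendsto (fun n => ∫ s, f s ∂(R n)) atTop (𝓝 (∫ s, f s ∂(R₀))) :=
  stmt8_general R R₀ hweak V hVc hV1 f hf M hfM hext
end

section
/- Let δ ∈ (0,T], z : [−δ,T] → ℝ^{m×d} Borel measurable with z(s) = 0 for s < 0 and ∫_0^T e^{αs+βA(s)}|z(s)|² ds < ∞, ρ a probability measure on [−δ,0], A continuous increasing with A(0)=0, α, β ≥ 0, and ω_δ := sup_{t∈[0,T−δ]}(A(t+δ)−A(t)). Then ∫_0^T e^{αt+βA(t)} ∫_{−δ}^0 |z(t+θ)|² ρ(dθ) dt ≤ e^{αδ+βω_δ} ∫_0^T e^{αs+βA(s)} |z(s)|² ds. -/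
open MeasureTheory Set Filter Topology
open scoped ENNReal Classical

noncomputable section

/-- For `z` measurable with `z(s) = 0` for `s < 0` and
`∫_0^T e^{αs+βA(s)}|z(s)|² ds < ∞`, `ρ` a probability measure on `[-δ,0]`, `A` continuous
increasing with `A(0)=0`, `α, β ≥ 0` and `ω_δ = sup_{t∈[0,T-δ]} (A(t+δ) - A(t))`:
`∫_0^T e^{αt+βA(t)} ∫_{-δ}^0 |z(t+θ)|² ρ(dθ) dt ≤ e^{αδ+βω_δ} ∫_0^T e^{αs+βA(s)} |z(s)|² ds`. -/
theorem stmt13 {m d : ℕ} (T δ : ℝ) (hδ : 0 < δ) (hδT : δ ≤ T)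
    (z : ℝ → EuclideanSpace ℝ (Fin m × Fin d)) (hz : Measurable z)
    (hz0 : ∀ s < (0:ℝ), z s = 0)
    (ρ : Measure ℝ) [IsProbabilityMeasure ρ] (hρ : ρ (Icc (-δ) 0)ᶜ = 0)
    (A : ℝ → ℝ) (hA : Monotone A) (hAc : Continuous A) (hA0 : A 0 = 0)
    (α β : ℝ) (hα : 0 ≤ α) (hβ : 0 ≤ β)
    (hfin : IntegrableOn (fun s => Real.exp (α * s + β * A s) * ‖z s‖ ^ 2) (Ioc 0 T)) :
    ∫ t in Ioc (0:ℝ) T, Real.exp (α * t + β * A t) * (∫ θ, ‖z (t + θ)‖ ^ 2 ∂ρ) ≤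
      Real.exp (α * δ + β * ⨆ t : Icc (0:ℝ) (T - δ), (A ((t:ℝ) + δ) - A (t:ℝ))) *
        ∫ s in Ioc (0:ℝ) T, Real.exp (α * s + β * A s) * ‖z s‖ ^ 2 := by
  set ω : ℝ := ⨆ t : Icc (0:ℝ) (T - δ), (A ((t:ℝ) + δ) - A (t:ℝ)) with hω_def
  set C : ℝ := Real.exp (α * δ + β * ω) with hC_def
  have hTδ : (0:ℝ) ≤ T - δ := by linarith
  -- the sup is a true bound
  have hbdd : BddAbove (Set.range fun t : Icc (0:ℝ) (T - δ) => A ((t:ℝ) + δ) - A (t:ℝ)) := by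
    refine ⟨A T, ?_⟩
    rintro x ⟨⟨u, hu0, hu1⟩, rfl⟩
    have h1 : A (u + δ) ≤ A T := hA (by linarith)
    have h2 : 0 ≤ A u := hA0 ▸ hA hu0
    simp only
    linarith
  have hωb : ∀ s t : ℝ, 0 ≤ s → s ≤ t → t ≤ T → t - s ≤ δ → A t - A s ≤ ω := by
    intro s t hs hst htT htsδ
    have humem : min s (T - δ) ∈ Icc (0:ℝ) (T - δ) := ⟨le_min hs hTδ, min_le_right _ _⟩
    have hle : A t - A s ≤ A (min s (T - δ) + δ) - A (min s (T - δ)) := by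
      rcases le_total s (T - δ) with h | h
      · rw [min_eq_left h]
        have := hA (show t ≤ s + δ by linarith)
        linarith
      · rw [min_eq_right h]
        have h1 : A t ≤ A (T - δ + δ) := hA (by linarith)
        have h2 : A (T - δ) ≤ A s := hA h
        linarith
    exact hle.trans (le_ciSup hbdd (⟨_, humem⟩ : Icc (0:ℝ) (T - δ)))
  -- basic measurability facts
  have hE_cont : Continuous fun t : ℝ => Real.exp (α * t + β * A t) :=
    Real.continuous_exp.comp ((continuous_const.mul continuous_id).add (continuous_const.mul hAc))
  set Eℒ : ℝ → ℝ≥0∞ := fun t => ENNReal.ofReal (Real.exp (α * t + β * A t)) with hEℒ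
  set Zℒ : ℝ → ℝ≥0∞ := fun s => ENNReal.ofReal (‖z s‖ ^ 2) with hZℒ
  have hEm : Measurable Eℒ := ENNReal.measurable_ofReal.comp hE_cont.measurable
  have hZrm : Measurable fun s => ‖z s‖ ^ 2 := hz.norm.pow_const 2
  have hZm : Measurable Zℒ := ENNReal.measurable_ofReal.comp hZrm
  set h : ℝ → ℝ≥0∞ := fun s => Eℒ s * Zℒ s with hh
  have hhm : Measurable h := hEm.mul hZm
  set I : ℝ≥0∞ := ∫⁻ s in Ioc (0:ℝ) T, h s with hI
  -- I is finite
  have h_eq_ofReal : ∀ s, h s = ENNReal.ofReal (Real.exp (α * s + β * A s) * ‖z s‖ ^ 2) := by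
    intro s
    show ENNReal.ofReal (Real.exp (α * s + β * A s)) * ENNReal.ofReal (‖z s‖ ^ 2) = _
    rw [← ENNReal.ofReal_mul (Real.exp_nonneg _)]
  have hf_nonneg : ∀ s : ℝ, 0 ≤ Real.exp (α * s + β * A s) * ‖z s‖ ^ 2 := fun s =>
    mul_nonneg (Real.exp_nonneg _) (sq_nonneg _)
  have hI_fin : I < ⊤ := by
    have := (hasFiniteIntegral_iff_ofReal (ae_of_all _ hf_nonneg)).mp hfin.hasFiniteIntegral
    simpa only [hI, h_eq_ofReal] using this
  have hI_toReal : I.toReal = ∫ s in Ioc (0:ℝ) T, Real.exp (α * s + β * A s) * ‖z s‖ ^ 2 := by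
    rw [integral_eq_lintegral_of_nonneg_ae (ae_of_all _ hf_nonneg)
      (hE_cont.measurable.mul hZrm).aestronglyMeasurable]
    simp only [hI, h_eq_ofReal]
  -- key pointwise bound
  have hkey : ∀ t ∈ Ioc (0:ℝ) T, ∀ θ ∈ Icc (-δ) (0:ℝ),
      Eℒ t * Zℒ (t + θ) ≤ ENNReal.ofReal C * h (t + θ) := by
    intro t ht θ hθ
    rcases lt_or_ge (t + θ) 0 with hneg | hpos
    · have : z (t + θ) = 0 := hz0 _ hneg
      simp [hZℒ, hh, this]
    · have hAb : A t - A (t + θ) ≤ ω :=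
        hωb (t + θ) t hpos (by linarith [hθ.2]) ht.2 (by linarith [hθ.1])
      have hexp : Real.exp (α * t + β * A t) ≤ C * Real.exp (α * (t + θ) + β * A (t + θ)) := by
        rw [hC_def, ← Real.exp_add, Real.exp_le_exp]
        have h1 : α * (-θ) ≤ α * δ := mul_le_mul_of_nonneg_left (by linarith [hθ.1]) hα
        have h2 : β * (A t - A (t + θ)) ≤ β * ω := mul_le_mul_of_nonneg_left hAb hβ
        nlinarith
      calc Eℒ t * Zℒ (t + θ)
          ≤ ENNReal.ofReal (C * Real.exp (α * (t + θ) + β * A (t + θ))) * Zℒ (t + θ) :=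
            mul_le_mul_left (ENNReal.ofReal_le_ofReal hexp) _
        _ = ENNReal.ofReal C * h (t + θ) := by
            rw [ENNReal.ofReal_mul (le_of_lt (Real.exp_pos _)), hh, hEℒ, mul_assoc]
  -- a.e. θ is in Icc (-δ) 0
  have hρae : ∀ᵐ θ ∂ρ, θ ∈ Icc (-δ) (0:ℝ) := by
    have := measure_eq_zero_iff_ae_notMem.mp hρ
    filter_upwards [this] with θ hθ
    simpa using hθ
  -- translation estimate
  have htrans : ∀ θ ∈ Icc (-δ) (0:ℝ),
      (∫⁻ t in Ioc (0:ℝ) T, h (t + θ)) ≤ I := by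
    intro θ hθ
    have hT0 : (0:ℝ) ≤ T + θ := by linarith [hθ.1]
    have step1 : (∫⁻ t in Ioc (0:ℝ) T, h (t + θ)) = ∫⁻ s in Ioc θ (T + θ), h s := by
      rw [← lintegral_indicator measurableSet_Ioc, ← lintegral_indicator measurableSet_Ioc]
      have hpt : ∀ t : ℝ, (Ioc (0:ℝ) T).indicator (fun t => h (t + θ)) t
          = (Ioc θ (T + θ)).indicator h (t + θ) := by
        intro t
        by_cases hmem : t ∈ Ioc (0:ℝ) T
        · have : t + θ ∈ Ioc θ (T + θ) := ⟨by linarith [hmem.1], by linarith [hmem.2]⟩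
          rw [Set.indicator_of_mem hmem, Set.indicator_of_mem this]
        · have : t + θ ∉ Ioc θ (T + θ) := by
            intro hc
            exact hmem ⟨by linarith [hc.1], by linarith [hc.2]⟩
          rw [Set.indicator_of_notMem hmem, Set.indicator_of_notMem this]
        
      simp_rw [hpt]
      exact (measurePreserving_add_right (volume : Measure ℝ) θ).lintegral_comp
        (hhm.indicator measurableSet_Ioc)
    have hzero : (∫⁻ s in Ioc θ (0:ℝ), h s) = 0 := by
      have hne : ∀ᵐ s : ℝ, s ∉ ({0} : Set ℝ) :=
        measure_eq_zero_iff_ae_notMem.mp Real.volume_singleton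
      have hae0 : ∀ᵐ s ∂(volume.restrict (Ioc θ (0:ℝ))), h s = 0 := by
        filter_upwards [ae_restrict_mem measurableSet_Ioc, ae_restrict_of_ae hne] with s hs hs0
        have hslt : s < 0 := lt_of_le_of_ne hs.2 (by simpa using hs0)
        simp [hh, hZℒ, hz0 s hslt]
      rw [lintegral_congr_ae hae0, lintegral_zero]
    have hsub : Ioc θ (T + θ) ⊆ Ioc θ (0:ℝ) ∪ Ioc (0:ℝ) T := by
      intro s hs
      rcases le_or_gt s 0 with h0 | h0
      · exact Or.inl ⟨hs.1, h0⟩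
      · exact Or.inr ⟨h0, le_trans hs.2 (by linarith [hθ.2])⟩
    calc (∫⁻ t in Ioc (0:ℝ) T, h (t + θ)) = ∫⁻ s in Ioc θ (T + θ), h s := step1
      _ ≤ ∫⁻ s in Ioc θ (0:ℝ) ∪ Ioc (0:ℝ) T, h s := lintegral_mono_set hsub
      _ ≤ (∫⁻ s in Ioc θ (0:ℝ), h s) + ∫⁻ s in Ioc (0:ℝ) T, h s := lintegral_union_le _ _ _
      _ = I := by rw [hzero, zero_add]
  -- the main chain of inequalities in ℝ≥0∞
  have hmain : (∫⁻ t in Ioc (0:ℝ) T,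
      ENNReal.ofReal (Real.exp (α * t + β * A t) * ∫ θ, ‖z (t + θ)‖ ^ 2 ∂ρ))
      ≤ ENNReal.ofReal C * I := by
    have hstep1 : ∀ t : ℝ,
        ENNReal.ofReal (Real.exp (α * t + β * A t) * ∫ θ, ‖z (t + θ)‖ ^ 2 ∂ρ)
        ≤ ∫⁻ θ, Eℒ t * Zℒ (t + θ) ∂ρ := by
      intro t
      have hm' : Measurable fun θ : ℝ => Zℒ (t + θ) :=
        hZm.comp (measurable_const.add measurable_id)
      rw [lintegral_const_mul _ hm']
      · rw [ENNReal.ofReal_mul (Real.exp_nonneg _)]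
        refine mul_le_mul_right ?_ _
        by_cases hint : Integrable (fun θ => ‖z (t + θ)‖ ^ 2) ρ
        · rw [ofReal_integral_eq_lintegral_ofReal hint (ae_of_all _ fun θ => sq_nonneg _)]
        · rw [integral_undef hint]
          simp
    have hmeas_inner : Measurable fun p : ℝ × ℝ => ENNReal.ofReal C * h (p.1 + p.2) :=
      (hhm.comp measurable_add).const_mul _
    calc (∫⁻ t in Ioc (0:ℝ) T,
          ENNReal.ofReal (Real.exp (α * t + β * A t) * ∫ θ, ‖z (t + θ)‖ ^ 2 ∂ρ))
        ≤ ∫⁻ t in Ioc (0:ℝ) T, ∫⁻ θ, Eℒ t * Zℒ (t + θ) ∂ρ :=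
          lintegral_mono fun t => hstep1 t
      _ ≤ ∫⁻ t in Ioc (0:ℝ) T, ∫⁻ θ, ENNReal.ofReal C * h (t + θ) ∂ρ := by
          refine setLIntegral_mono (hmeas_inner.lintegral_prod_right') ?_
          intro t ht
          refine lintegral_mono_ae ?_
          filter_upwards [hρae] with θ hθ
          exact hkey t ht θ hθ
      _ = ∫⁻ θ, (∫⁻ t in Ioc (0:ℝ) T, ENNReal.ofReal C * h (t + θ)) ∂ρ :=
          lintegral_lintegral_swap (f := fun t θ => ENNReal.ofReal C * h (t + θ)) hmeas_inner.aemeasurable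
      _ ≤ ∫⁻ θ, ENNReal.ofReal C * I ∂ρ := by
          refine lintegral_mono_ae ?_
          filter_upwards [hρae] with θ hθ
          have hm'' : Measurable fun t : ℝ => h (t + θ) :=
            hhm.comp (measurable_id.add_const θ)
          rw [lintegral_const_mul _ hm'']
          exact mul_le_mul_right (htrans θ hθ) _
      _ = ENNReal.ofReal C * I := by
          rw [lintegral_const, measure_univ, mul_one]
  -- measurability of the LHS integrand
  have hGsm : StronglyMeasurable fun t : ℝ => ∫ θ, ‖z (t + θ)‖ ^ 2 ∂ρ := by
    have : StronglyMeasurable fun p : ℝ × ℝ => ‖z (p.1 + p.2)‖ ^ 2 :=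
      ((hz.comp measurable_add).norm.pow_const 2).stronglyMeasurable
    exact this.integral_prod_right'
  have hF_nonneg : ∀ t : ℝ, 0 ≤ Real.exp (α * t + β * A t) * ∫ θ, ‖z (t + θ)‖ ^ 2 ∂ρ :=
    fun t => mul_nonneg (Real.exp_nonneg _) (integral_nonneg fun θ => sq_nonneg _)
  have hlhs_eq : (∫ t in Ioc (0:ℝ) T,
      Real.exp (α * t + β * A t) * ∫ θ, ‖z (t + θ)‖ ^ 2 ∂ρ)
      = (∫⁻ t in Ioc (0:ℝ) T,
        ENNReal.ofReal (Real.exp (α * t + β * A t) * ∫ θ, ‖z (t + θ)‖ ^ 2 ∂ρ)).toReal := by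
    exact integral_eq_lintegral_of_nonneg_ae (ae_of_all _ hF_nonneg)
      ((hE_cont.measurable.stronglyMeasurable.mul hGsm).aestronglyMeasurable)
  rw [hlhs_eq, ← hI_toReal]
  calc (∫⁻ t in Ioc (0:ℝ) T,
        ENNReal.ofReal (Real.exp (α * t + β * A t) * ∫ θ, ‖z (t + θ)‖ ^ 2 ∂ρ)).toReal
      ≤ (ENNReal.ofReal C * I).toReal :=
        ENNReal.toReal_mono (ENNReal.mul_ne_top ENNReal.ofReal_ne_top hI_fin.ne) hmain
    _ = C * I.toReal := by
        rw [ENNReal.toReal_mul, ENNReal.toReal_ofReal (Real.exp_nonneg _)]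

end
end
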